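/- arXiv:1602.07233 — 2 statements merged into one kernel-verified Lean document; each statement's English description precedes it below -/
import Mathlib

section
/- The submonoid W_M · Λ̌⁺_G is saturated in the weight lattice Λ̌: if λ̌ ∈ Λ̌ and n·λ̌ ∈ W_M · Λ̌⁺_G for some positive integer n, then λ̌ ∈ W_M · Λ̌⁺_G. Equivalently, W_M·Λ̌⁺_G equals the intersection of Λ̌ with the rational cone it generates in Λ̌ ⊗ ℚ. -/
/-- Combinatorial (co)weight data of a connected reductive group `G` together with a
parabolic subgroup `P` with Levi factor `M`:  `Λ` is the coweight lattice, `Λd` the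
weight lattice, `pair` the canonical pairing, `ΓG` the vertices of the Dynkin diagram
of `G`, `ΓM ⊆ ΓG` those of `M`, `coroot`/`root` the simple coroots/roots and
`posCoroot` the set of positive coroots of `G`. -/
structure LeviRootData (Λ Λd : Type*) [AddCommGroup Λ] [AddCommGroup Λd] where
  pair : Λd →+ Λ →+ ℤ
  ΓG : Type
  finΓG : Finite ΓG
  coroot : ΓG → Λ
  root : ΓG → Λd
  posCoroot : Set Λ
  ΓM : Set ΓG
  pair_self : ∀ i, pair (root i) (coroot i) = 2
  pair_nonpos : ∀ i j, i ≠ j → pair (root i) (coroot j) ≤ 0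
  coroot_mem : ∀ i, coroot i ∈ posCoroot
  posCoroot_le : ∀ α ∈ posCoroot, α ∈ AddSubmonoid.closure (Set.range coroot)

namespace LeviRootData

variable {Λ Λd : Type*} [AddCommGroup Λ] [AddCommGroup Λd] (d : LeviRootData Λ Λd)

/-- The positive coroots of the Levi `M`: the positive coroots of `G` that are coroots
of `M`, i.e. lie in the span of the simple coroots of `M`. -/
def posCorootM : Set Λ :=
  {α | α ∈ d.posCoroot ∧ α ∈ AddSubgroup.closure (d.coroot '' d.ΓM)}

/-- `Λ^pos_G`: the non-negative integral span of the positive coroots of `G`. -/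
def posG : AddSubmonoid Λ := AddSubmonoid.closure d.posCoroot

/-- `Λ^pos_{U(P)}`: the non-negative integral span of the positive coroots of `G`
that are not coroots of `M`. -/
def posUP : AddSubmonoid Λ := AddSubmonoid.closure (d.posCoroot \ d.posCorootM)

/-- The non-negative integral span of the simple coroots of `M` (defining `≤_M` on `Λ`). -/
def posMco : AddSubmonoid Λ := AddSubmonoid.closure (d.coroot '' d.ΓM)

/-- `Λ̌^pos_M`: the non-negative integral span of the simple roots of `M`
(defining `≤_M` on `Λ̌`). -/
def posMd : AddSubmonoid Λd := AddSubmonoid.closure (d.root '' d.ΓM)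

/-- `Λ̌^pos_G`: the non-negative integral span of the (simple, equivalently positive)
roots of `G`. -/
def posGd : AddSubmonoid Λd := AddSubmonoid.closure (Set.range d.root)

/-- The simple reflection `s_i` acting on the coweight lattice. -/
def refl (i : d.ΓG) : AddAut Λ where
  toFun x := x - d.pair (d.root i) x • d.coroot i
  invFun x := x - d.pair (d.root i) x • d.coroot i
  left_inv x := by
    have h := d.pair_self i
    simp only [map_sub, map_zsmul, h, smul_eq_mul]
    module
  right_inv x := by
    have h := d.pair_self i
    simp only [map_sub, map_zsmul, h, smul_eq_mul]
    module
  map_add' x y := by simp only [map_add, add_smul]; abel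

/-- The simple reflection `s_i` acting on the weight lattice. -/
def reflD (i : d.ΓG) : AddAut Λd where
  toFun x := x - d.pair.flip (d.coroot i) x • d.root i
  invFun x := x - d.pair.flip (d.coroot i) x • d.root i
  left_inv x := by
    have h : d.pair.flip (d.coroot i) (d.root i) = 2 := d.pair_self i
    simp only [map_sub, map_zsmul, h, smul_eq_mul]
    module
  right_inv x := by
    have h : d.pair.flip (d.coroot i) (d.root i) = 2 := d.pair_self i
    simp only [map_sub, map_zsmul, h, smul_eq_mul]
    module
  map_add' x y := by simp only [map_add, add_smul]; abel

/-- The Weyl group `W_M` of the Levi `M`, acting on the coweight lattice. -/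
def WM : AddSubgroup (AddAut Λ) := AddSubgroup.closure (d.refl '' d.ΓM)

/-- The Weyl group `W_M` of the Levi `M`, acting on the weight lattice. -/
def WMd : AddSubgroup (AddAut Λd) := AddSubgroup.closure (d.reflD '' d.ΓM)

/-- The Weyl group `W` of `G`, acting on the weight lattice. -/
def WGd : AddSubgroup (AddAut Λd) := AddSubgroup.closure (Set.range d.reflD)

/-- `Λ̌⁺_G`: the dominant weights of `G`. -/
def domG : Set Λd := {x | ∀ i, 0 ≤ d.pair x (d.coroot i)}

/-- `Λ̌⁺_M`: the `M`-dominant weights. -/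
def domM : Set Λd := {x | ∀ i ∈ d.ΓM, 0 ≤ d.pair x (d.coroot i)}

/-- `Λ⁺_M`: the `M`-dominant coweights. -/
def codomM : Set Λ := {x | ∀ i ∈ d.ΓM, 0 ≤ d.pair (d.root i) x}

/-- `W_M · Λ̌⁺_G`: the union of the `W_M`-orbits of the `G`-dominant weights. -/
def WMdom : Set Λd := {x | ∃ w ∈ d.WMd, ∃ y ∈ d.domG, x = w y}

end LeviRootData

namespace LeviRootData

variable {Λ Λd : Type*} [AddCommGroup Λ] [AddCommGroup Λd] (d : LeviRootData Λ Λd)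

theorem mem_domG_of_nsmul_mem {x : Λd} {n : ℕ} (hn : 0 < n) (h : n • x ∈ d.domG) :
    x ∈ d.domG := fun i => by
  have hi := h i
  rw [map_nsmul, AddMonoidHom.nsmul_apply, nsmul_eq_mul] at hi
  exact nonneg_of_mul_nonneg_right hi (Int.natCast_pos.mpr hn)

end LeviRootData

/-- The submonoid `W_M · Λ̌⁺_G` is saturated in the weight lattice:
if `n • λ̌ ∈ W_M · Λ̌⁺_G` for a positive integer `n`, then `λ̌ ∈ W_M · Λ̌⁺_G`. -/
theorem stmt5 {Λ Λd : Type*} [AddCommGroup Λ] [AddCommGroup Λd]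
    (d : LeviRootData Λ Λd) (χ : Λd) (n : ℕ) (hn : 0 < n)
    (h : n • χ ∈ d.WMdom) : χ ∈ d.WMdom := by
  obtain ⟨w, hw, y, hy, hwy⟩ := h
  have hdom : n • w.symm χ ∈ d.domG := by
    rwa [← map_nsmul, hwy, w.symm_apply_apply]
  exact ⟨w, hw, w.symm χ, d.mem_domG_of_nsmul_mem hn hdom, (w.apply_symm_apply χ).symm⟩
end

section
/- Let M be a connected reductive group over an algebraically closed field and let A ⊂ k[M] be the set of regular functions f such that for all m₁, m₂ ∈ M the function t ↦ f(m₁ t m₂) on a fixed maximal torus T_sub lies in the subalgebra R spanned by the characters in a W_M-stable rational cone C̆. Then A is a subalgebra of k[M] closed under the comultiplication of k[M], i.e., the coproduct maps A into A ⊗ A. -/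
/-- The inclusion of the lattice `Λ̌ = ℤⁿ` into the rational vector space `Λ̌ ⊗ ℚ = ℚⁿ`. -/
def latticeToQ (n : ℕ) (v : Fin n → ℤ) : Fin n → ℚ := fun i => (v i : ℚ)

/-- The convex cone in `ℚⁿ` generated by a set `gens`: the closure of the set of
non-negative rational multiples of elements of `gens` under addition. -/
def coneOf (n : ℕ) (gens : Set (Fin n → ℚ)) : AddSubmonoid (Fin n → ℚ) :=
  AddSubmonoid.closure {x | ∃ q : ℚ, 0 ≤ q ∧ ∃ v ∈ gens, x = q • v}

/-!
The characters in the cone form a monoid, so their span `R` is a subalgebra, and `A` is the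
intersection of `k[M]` with the preimages of `R` under the algebra maps `f ↦ (t ↦ f (m₁ t m₂))`.

For the coproduct, `Φ(x, y) = f (x y)` has finite rank and, for `f ∈ A`, all its slices
`Φ(x, ·)` and `Φ(·, y)` are translates of `f`, hence lie in `A`. Expanding the columns in a basis
`uᵢ` of their span gives `Φ(x, y) = ∑ uᵢ(x) vᵢ(y)`; since linearly independent functions are
separated by finitely many points, each `vᵢ` is a finite combination of rows `Φ(x, ·)`, so lies
in `A`.
-/

theorem LinearIndependent.span_range_eval_eq_top {k X ι : Type*} [Field k] [Fintype ι]
    {u : ι → X → k} (hu : LinearIndependent k u) :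
    Submodule.span k (Set.range fun x i => u i x) = ⊤ := by
  classical
  rw [← Submodule.dualAnnihilator_eq_bot_iff, Submodule.eq_bot_iff]
  intro φ hφ
  have hφu : ∑ i, φ (fun j => if i = j then 1 else 0) • u i = 0 := by
    funext x
    have := (Submodule.mem_dualAnnihilator φ).mp hφ _ (Submodule.subset_span ⟨x, rfl⟩)
    rw [LinearMap.pi_apply_eq_sum_univ] at this
    simpa [mul_comm] using this
  refine LinearMap.ext fun v => ?_
  rw [LinearMap.pi_apply_eq_sum_univ φ v]
  simp [Fintype.linearIndependent_iff.mp hu _ hφu]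

theorem Submodule.mem_of_forall_eq_sum_mul {k Y ι : Type*} [CommSemiring k] [Fintype ι]
    {Q : Submodule k (Y → k)} {φ : Y → k} (c : ι → k) {h : ι → Y → k} (hh : ∀ j, h j ∈ Q)
    (hφ : ∀ y, φ y = ∑ j, c j * h j y) : φ ∈ Q := by
  have : φ = ∑ j, c j • h j := funext fun y => by simp [hφ]
  exact this ▸ Q.sum_mem fun j _ => Q.smul_mem _ (hh j)

theorem exists_sum_mul_of_slices_mem {k X Y ι : Type*} [Field k] [Fintype ι] {Φ : X → Y → k}
    (g : ι → X → k) (h : ι → Y → k) (hΦ : ∀ x y, Φ x y = ∑ j, g j x * h j y)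
    {P : Submodule k (X → k)} {Q : Submodule k (Y → k)}
    (hP : ∀ y, (fun x => Φ x y) ∈ P) (hQ : ∀ x, Φ x ∈ Q) :
    ∃ (r : ℕ) (u : Fin r → X → k) (v : Fin r → Y → k),
      (∀ i, u i ∈ P ∧ v i ∈ Q) ∧ ∀ x y, Φ x y = ∑ i, u i x * v i y := by
  classical
  set W := Submodule.span k (Set.range fun y x => Φ x y)
  have hWg : W ≤ Submodule.span k (Set.range g) := by
    refine Submodule.span_le.mpr (Set.range_subset_iff.mpr fun y => ?_)
    exact Submodule.mem_of_forall_eq_sum_mul (fun j => h j y)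
      (fun j => Submodule.subset_span ⟨j, rfl⟩) fun x => by simp [hΦ, mul_comm]
  have hg := FiniteDimensional.span_of_finite k (Set.finite_range g)
  have : FiniteDimensional k W := Submodule.finiteDimensional_of_le hWg
  let b := Module.finBasis k W
  let u : Fin _ → X → k := fun i => b i
  let v : Fin _ → Y → k := fun i y => b.repr ⟨_, Submodule.subset_span ⟨y, rfl⟩⟩ i
  have hΦuv : ∀ x, Φ x = Fintype.linearCombination k v (fun i => u i x) := by
    intro x
    funext y
    have := congrArg (fun w : W => (w : X → k) x) (b.sum_repr ⟨_, Submodule.subset_span ⟨y, rfl⟩⟩)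
    simp only [Submodule.coe_sum, Submodule.coe_smul, Finset.sum_apply, Pi.smul_apply,
      smul_eq_mul] at this
    simp [Fintype.linearCombination_apply, ← this, u, v, mul_comm]
  have hv : LinearMap.range (Fintype.linearCombination k v) ≤ Q := by
    have hu : LinearIndependent k u := b.linearIndependent.map' W.subtype W.ker_subtype
    have hsurj := Finsupp.range_linearCombination (R := k) (v := fun x i => u i x)
    rw [hu.span_range_eval_eq_top] at hsurj
    have hcomp : Fintype.linearCombination k v ∘ₗ Finsupp.linearCombination k (fun x i => u i x)
        = Finsupp.linearCombination k Φ := by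
      ext x : 2
      simp [hΦuv x]
    rw [← LinearMap.range_comp_of_range_eq_top _ hsurj, hcomp, Finsupp.range_linearCombination]
    exact Submodule.span_le.mpr (Set.range_subset_iff.mpr hQ)
  refine ⟨_, u, v, fun i => ⟨?_, hv ⟨Pi.single i 1, by simp⟩⟩, fun x y => ?_⟩
  · exact Submodule.span_le.mpr (Set.range_subset_iff.mpr hP) (b i).2
  · rw [hΦuv x, Fintype.linearCombination_apply, Finset.sum_apply]
    simp

theorem MonoidHom.apply_eq_one_of_mul_self {G k : Type*} [Group G] [Monoid k]
    (χ : G →* k) {t : G} (h : χ t * χ t = χ t) : χ t = 1 :=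
  ((Group.isUnit t).map χ).mul_eq_left.mp h

def characterSubmonoid {G Λ k : Type*} [Group G] [AddMonoid Λ] [Monoid k] (C : AddSubmonoid Λ)
    (χ : Λ → G →* k) (hχ : ∀ x y t, χ (x + y) t = χ x t * χ y t) : Submonoid (G → k) where
  carrier := {f | ∃ x ∈ C, f = fun t => χ x t}
  one_mem' := ⟨0, C.zero_mem, funext fun t =>
    ((χ 0).apply_eq_one_of_mul_self (by rw [← hχ, add_zero])).symm⟩
  mul_mem' := by
    rintro _ _ ⟨x, hx, rfl⟩ ⟨y, hy, rfl⟩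
    exact ⟨x + y, C.add_mem hx hy, funext fun t => (hχ x y t).symm⟩

/-- The lattice points `C̆ ∩ Λ̌` of the cone. -/
def latticeCone (n : ℕ) (gens : Set (Fin n → ℚ)) : AddSubmonoid (Fin n → ℤ) :=
  (coneOf n gens).comap (AddMonoidHom.compLeft (Int.castAddHom ℚ) (Fin n))

section Translates

variable (k : Type*) {M : Type*} [CommSemiring k] [Group M]

def translateRestrict (T : Subgroup M) (m₁ m₂ : M) : (M → k) →ₐ[k] (T → k) :=
  AlgHom.pi fun t => Pi.evalAlgHom k (fun _ => k) (m₁ * t * m₂)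

variable {k} (F : Subalgebra k (M → k)) (T : Subgroup M) (R : Subalgebra k (T → k))

def translatesRestrictSubalgebra : Subalgebra k (M → k) :=
  F ⊓ ⨅ m₁, ⨅ m₂, R.comap (translateRestrict k T m₁ m₂)

theorem mem_translatesRestrictSubalgebra {f : M → k} :
    f ∈ translatesRestrictSubalgebra F T R ↔
      f ∈ F ∧ ∀ m₁ m₂ : M, (fun t : T => f (m₁ * t * m₂)) ∈ R := by
  simp only [translatesRestrictSubalgebra, Algebra.mem_inf, Algebra.mem_iInf,
    Subalgebra.mem_comap]
  rfl

variable {F T R}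

theorem mul_left_mem_translatesRestrictSubalgebra
    (hF : ∀ f ∈ F, ∀ x, (fun y => f (x * y)) ∈ F) {f : M → k}
    (hf : f ∈ translatesRestrictSubalgebra F T R) (x : M) :
    (fun y => f (x * y)) ∈ translatesRestrictSubalgebra F T R := by
  rw [mem_translatesRestrictSubalgebra] at hf ⊢
  exact ⟨hF f hf.1 x, fun m₁ m₂ => by simpa only [mul_assoc] using hf.2 (x * m₁) m₂⟩

theorem mul_right_mem_translatesRestrictSubalgebra
    (hF : ∀ f ∈ F, ∀ y, (fun x => f (x * y)) ∈ F) {f : M → k}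
    (hf : f ∈ translatesRestrictSubalgebra F T R) (y : M) :
    (fun x => f (x * y)) ∈ translatesRestrictSubalgebra F T R := by
  rw [mem_translatesRestrictSubalgebra] at hf ⊢
  exact ⟨hF f hf.1 y, fun m₁ m₂ => by simpa only [mul_assoc] using hf.2 m₁ (m₂ * y)⟩

end Translates

theorem stmt14_general (k : Type) [Field k]
    (M : Type*) [Group M] (Tsub : Subgroup M)
    (n : ℕ) (gens : Finset (Fin n → ℚ))
    (χ : (Fin n → ℤ) → (Tsub →* k))      -- the characters of the torus `T_sub`
    (hχ : ∀ (x y : Fin n → ℤ) (t : Tsub), χ (x + y) t = χ x t * χ y t)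
    (F : Subalgebra k (M → k))            -- the regular functions `k[M]`
    (hHopf : ∀ f ∈ F, ∃ (m : ℕ) (g h : Fin m → (M → k)),
      (∀ j, g j ∈ F ∧ h j ∈ F) ∧ ∀ x y : M, f (x * y) = ∑ j, g j x * h j y)
    (R : Submodule k (Tsub → k))
    (hR : R = Submodule.span k
      {f | ∃ x : Fin n → ℤ, latticeToQ n x ∈ coneOf n ↑gens ∧ f = fun t => χ x t})
    (A : Set (M → k))
    (hA : A = {f | f ∈ F ∧ ∀ m₁ m₂ : M, (fun t : Tsub => f (m₁ * ↑t * m₂)) ∈ R}) :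
    (∃ Aalg : Subalgebra k (M → k), ↑Aalg = A) ∧
    ∀ f ∈ A, ∃ (m : ℕ) (g h : Fin m → (M → k)),
      (∀ j, g j ∈ A ∧ h j ∈ A) ∧ ∀ x y : M, f (x * y) = ∑ j, g j x * h j y := by
  set Ralg := Algebra.adjoin k (characterSubmonoid (latticeCone n gens) χ hχ : Set (Tsub → k))
  have hRalg : R = Subalgebra.toSubmodule Ralg := by
    rw [Algebra.adjoin_eq_span, Submonoid.closure_eq]
    exact hR
  set Aalg := translatesRestrictSubalgebra F Tsub Ralg
  have hAalg : (Aalg : Set (M → k)) = A := by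
    ext f
    rw [hA, hRalg, SetLike.mem_coe, mem_translatesRestrictSubalgebra]
    rfl
  refine ⟨⟨Aalg, hAalg⟩, fun f hf => ?_⟩
  rw [← hAalg] at hf ⊢
  have hFl : ∀ f ∈ F, ∀ x, (fun y => f (x * y)) ∈ F := fun f hf x => by
    obtain ⟨m, g, h, hgh, hfgh⟩ := hHopf f hf
    exact Submodule.mem_of_forall_eq_sum_mul (Q := Subalgebra.toSubmodule F)
      (fun j => g j x) (fun j => (hgh j).2) (hfgh x)
  have hFr : ∀ f ∈ F, ∀ y, (fun x => f (x * y)) ∈ F := fun f hf y => by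
    obtain ⟨m, g, h, hgh, hfgh⟩ := hHopf f hf
    exact Submodule.mem_of_forall_eq_sum_mul (Q := Subalgebra.toSubmodule F)
      (fun j => h j y) (fun j => (hgh j).1) fun x => by simp [hfgh x y, mul_comm]
  obtain ⟨m, g, h, -, hfgh⟩ := hHopf f (mem_translatesRestrictSubalgebra .. |>.mp hf).1
  exact exists_sum_mul_of_slices_mem g h hfgh (P := Subalgebra.toSubmodule Aalg)
    (Q := Subalgebra.toSubmodule Aalg) (mul_right_mem_translatesRestrictSubalgebra hFr hf)
    (mul_left_mem_translatesRestrictSubalgebra hFl hf)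

/-- Let `M` be a connected reductive group over an algebraically
closed field `k` (modelled by its group of points together with its function algebra
`F = k[M] ⊆ Map(M, k)`, a Hopf algebra: the hypothesis `hHopf` says that every
`f ∈ k[M]` has a matrix-coefficient decomposition `f(xy) = ∑ gᵢ(x) hᵢ(y)` with
`gᵢ, hᵢ ∈ k[M]`, i.e. records the comultiplication of `k[M]`).  Let `T_sub ⊆ M` be a
maximal torus, `C̆ ⊆ Λ̌ ⊗ ℚ` a `W_M`-stable convex rational polyhedral cone, `R` the
span of the characters of `T_sub` lying in `C̆ ∩ Λ̌`, and
`A = { f ∈ k[M] : (t ↦ f(m₁ t m₂)) ∈ R for all m₁, m₂ ∈ M }`.  Then `A` is a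
subalgebra of `k[M]` and the coproduct of `k[M]` maps `A` into `A ⊗ A`: every `f ∈ A`
has a decomposition `f(xy) = ∑ gᵢ(x) hᵢ(y)` with `gᵢ, hᵢ ∈ A`. -/
theorem stmt14 (k : Type) [Field k] [IsAlgClosed k]
    (M : Type*) [Group M] (Tsub : Subgroup M)
    (n : ℕ) (gens : Finset (Fin n → ℚ))
    (hlat : ∀ v ∈ gens, ∃ u : Fin n → ℤ, v = latticeToQ n u)
    (WM : Type*) [Group WM] [Finite WM] [DistribMulAction WM (Fin n → ℤ)]
    (hstable : ∀ (w : WM) (x : Fin n → ℤ), latticeToQ n x ∈ coneOf n ↑gens →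
      latticeToQ n (w • x) ∈ coneOf n ↑gens)
    (χ : (Fin n → ℤ) → (Tsub →* k))      -- the characters of the torus `T_sub`
    (hχ : ∀ (x y : Fin n → ℤ) (t : Tsub), χ (x + y) t = χ x t * χ y t)
    (F : Subalgebra k (M → k))            -- the regular functions `k[M]`
    (hHopf : ∀ f ∈ F, ∃ (m : ℕ) (g h : Fin m → (M → k)),
      (∀ j, g j ∈ F ∧ h j ∈ F) ∧ ∀ x y : M, f (x * y) = ∑ j, g j x * h j y)
    (R : Submodule k (Tsub → k))
    (hR : R = Submodule.span k
      {f | ∃ x : Fin n → ℤ, latticeToQ n x ∈ coneOf n ↑gens ∧ f = fun t => χ x t})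
    (A : Set (M → k))
    (hA : A = {f | f ∈ F ∧ ∀ m₁ m₂ : M, (fun t : Tsub => f (m₁ * ↑t * m₂)) ∈ R}) :
    (∃ Aalg : Subalgebra k (M → k), ↑Aalg = A) ∧
    ∀ f ∈ A, ∃ (m : ℕ) (g h : Fin m → (M → k)),
      (∀ j, g j ∈ A ∧ h j ∈ A) ∧ ∀ x y : M, f (x * y) = ∑ j, g j x * h j y :=
  stmt14_general k M Tsub n gens χ hχ F hHopf R hR A hA
end
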